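/- Fix N ≥ 2, real numbers λ_1 > λ_2 ≥ λ_3 ≥ … ≥ λ_N and real numbers c_1, …, c_N with ∑_{k=1}^{N} c_k² = 1, c_1 ≠ 0 and c_2 ≠ 0. Define D(t) = ∑_{k=1}^{N} c_k² e^{2λ_k t}, m(t) = (∑_{j} λ_j c_j² e^{2λ_j t})/D(t), E(t) = (∑_{j} (λ_j − m(t))² c_j² e^{2λ_j t})/D(t), and for ε > 0 the stopping time T(ε) = inf{ t ≥ 0 : E(t) ≤ ε² }. Then T(ε) is finite for every ε > 0, and T(ε)/log(ε⁻¹) → 1/(λ_1 − λ_2) as ε → 0⁺. -/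

import Mathlib

/-!
`E t` is the variance of the eigenvalues `lam j` under the weights `c j ^ 2 * exp (2 * lam j * t)`.
Being a variance, it is at most the second moment about the top eigenvalue, in which the top
weight drops out; this gives `E t ≤ B * exp (-2 g t)`, with `g` the gap between the two largest
eigenvalues. Keeping only the two top weights and using `p (x-a)² + q (y-a)² ≥ pq (x-y)² / (p+q)`
gives `A * exp (-2 g t) ≤ E t`. Between two such exponentials the first time at which
`E t ≤ ε ^ 2` is `log ε⁻¹ / g + O(1)`.
-/

open Finset Filter Real Topology

section WeightedVariance

variable {ι : Type*} [Fintype ι] (w x : ι → ℝ)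

noncomputable def weightedMean : ℝ := (∑ j, x j * w j) / ∑ j, w j

noncomputable def weightedVariance : ℝ :=
  (∑ j, (x j - weightedMean w x) ^ 2 * w j) / ∑ j, w j

theorem sum_sq_sub_mul_eq (a : ℝ) (hw : ∑ j, w j ≠ 0) :
    ∑ j, (x j - a) ^ 2 * w j =
      ∑ j, (x j - weightedMean w x) ^ 2 * w j + (weightedMean w x - a) ^ 2 * ∑ j, w j := by
  set μ := weightedMean w x with hμ
  have hμw : ∑ j, x j * w j = μ * ∑ j, w j := by rw [hμ, weightedMean, div_mul_cancel₀ _ hw]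
  rw [← sub_eq_iff_eq_add', ← sum_sub_distrib]
  calc ∑ j, ((x j - a) ^ 2 * w j - (x j - μ) ^ 2 * w j)
      = (μ - a) * (2 * ∑ j, x j * w j - (a + μ) * ∑ j, w j) := by
        rw [mul_sum, mul_sum, ← sum_sub_distrib, mul_sum]
        exact sum_congr rfl fun j _ => by ring
    _ = (μ - a) ^ 2 * ∑ j, w j := by rw [hμw]; ring

theorem weightedVariance_le (a : ℝ) (hw : 0 < ∑ j, w j) :
    weightedVariance w x ≤ (∑ j, (x j - a) ^ 2 * w j) / ∑ j, w j := by
  rw [weightedVariance, sum_sq_sub_mul_eq w x a hw.ne']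
  gcongr
  exact le_add_of_nonneg_right (by positivity)

theorem sq_sub_mul_add_sq_sub_mul_le_sum (hw : ∀ k, 0 ≤ w k) {i j : ι} (hij : i ≠ j) (a : ℝ) :
    (x i - a) ^ 2 * w i + (x j - a) ^ 2 * w j ≤ ∑ k, (x k - a) ^ 2 * w k := by
  classical
  rw [← sum_pair (f := fun k => (x k - a) ^ 2 * w k) hij]
  exact sum_le_sum_of_subset_of_nonneg (subset_univ _)
    fun k _ _ => mul_nonneg (sq_nonneg _) (hw k)

end WeightedVariance

theorem mul_mul_sq_sub_le_mul (p q x y a : ℝ) :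
    p * q * (x - y) ^ 2 ≤ (p + q) * (p * (x - a) ^ 2 + q * (y - a) ^ 2) := by
  -- the difference of the two sides is `(p (x - a) + q (y - a)) ^ 2`
  nlinarith [sq_nonneg (p * (x - a) + q * (y - a))]

section Toda

variable {ι : Type*} (lam c : ι → ℝ)

noncomputable def todaWeight (t : ℝ) (j : ι) : ℝ := c j ^ 2 * exp (2 * lam j * t)

variable {lam c}

theorem todaWeight_le {μ t : ℝ} {j : ι} (hj : lam j ≤ μ) (ht : 0 ≤ t) :
    todaWeight lam c t j ≤ c j ^ 2 * exp (2 * μ * t) := by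
  unfold todaWeight
  gcongr

theorem todaWeight_nonneg (t : ℝ) (j : ι) : 0 ≤ todaWeight lam c t j := by
  unfold todaWeight
  positivity

variable [Fintype ι] {i₀ i₁ : ι}

theorem weightedVariance_todaWeight_le (hsecond : ∀ j, j ≠ i₀ → lam j ≤ lam i₁)
    (hc₀ : c i₀ ≠ 0) {t : ℝ} (ht : 0 ≤ t) :
    weightedVariance (todaWeight lam c t) lam ≤
      (∑ j, (lam j - lam i₀) ^ 2 * c j ^ 2) / c i₀ ^ 2 *
        exp (-(2 * (lam i₀ - lam i₁)) * t) := by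
  have hW₀ : 0 < c i₀ ^ 2 * exp (2 * lam i₀ * t) := by positivity
  have hW : c i₀ ^ 2 * exp (2 * lam i₀ * t) ≤ ∑ j, todaWeight lam c t j :=
    single_le_sum (fun j _ => todaWeight_nonneg t j) (mem_univ i₀)
  have hnum : ∑ j, (lam j - lam i₀) ^ 2 * todaWeight lam c t j ≤
      (∑ j, (lam j - lam i₀) ^ 2 * c j ^ 2) * exp (2 * lam i₁ * t) := by
    rw [sum_mul]
    refine sum_le_sum fun j _ => ?_
    by_cases hj : j = i₀
    · simp [hj]
    · rw [mul_assoc]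
      exact mul_le_mul_of_nonneg_left (todaWeight_le (hsecond j hj) ht) (sq_nonneg _)
  calc weightedVariance (todaWeight lam c t) lam
      ≤ (∑ j, (lam j - lam i₀) ^ 2 * todaWeight lam c t j) / ∑ j, todaWeight lam c t j :=
        weightedVariance_le _ _ _ (hW₀.trans_le hW)
    _ ≤ (∑ j, (lam j - lam i₀) ^ 2 * c j ^ 2) * exp (2 * lam i₁ * t) /
          (c i₀ ^ 2 * exp (2 * lam i₀ * t)) :=
        div_le_div₀ (by positivity) hnum hW₀ hW
    _ = _ := by
      rw [show -(2 * (lam i₀ - lam i₁)) * t = 2 * lam i₁ * t - 2 * lam i₀ * t by ring, exp_sub]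
      field_simp

theorem le_weightedVariance_todaWeight (htop : ∀ j, lam j ≤ lam i₀) (hi : i₀ ≠ i₁)
    (hc₀ : c i₀ ≠ 0) (hc₁ : c i₁ ≠ 0) {t : ℝ} (ht : 0 ≤ t) :
    c i₀ ^ 2 * c i₁ ^ 2 * (lam i₀ - lam i₁) ^ 2 / ((c i₀ ^ 2 + c i₁ ^ 2) * ∑ j, c j ^ 2) *
        exp (-(2 * (lam i₀ - lam i₁)) * t) ≤
      weightedVariance (todaWeight lam c t) lam := by
  set w := todaWeight lam c t
  set μ := weightedMean w lam
  have hW₀ : 0 < ∑ j, w j :=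
    (by unfold w todaWeight; positivity : 0 < w i₀).trans_le
      (single_le_sum (fun j _ => todaWeight_nonneg t j) (mem_univ i₀))
  have hW : ∑ j, w j ≤ (∑ j, c j ^ 2) * exp (2 * lam i₀ * t) := by
    rw [sum_mul]
    exact sum_le_sum fun j _ => todaWeight_le (htop j) ht
  have hspread : c i₀ ^ 2 * c i₁ ^ 2 * (lam i₀ - lam i₁) ^ 2 / (c i₀ ^ 2 + c i₁ ^ 2) ≤
      c i₀ ^ 2 * (lam i₀ - μ) ^ 2 + c i₁ ^ 2 * (lam i₁ - μ) ^ 2 := by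
    rw [div_le_iff₀' (by positivity)]
    exact mul_mul_sq_sub_le_mul _ _ _ _ μ
  have hpair : (c i₀ ^ 2 * (lam i₀ - μ) ^ 2 + c i₁ ^ 2 * (lam i₁ - μ) ^ 2) * exp (2 * lam i₁ * t)
      ≤ (lam i₀ - μ) ^ 2 * w i₀ + (lam i₁ - μ) ^ 2 * w i₁ := by
    have h : exp (2 * lam i₁ * t) ≤ exp (2 * lam i₀ * t) := by gcongr; exact htop i₁
    unfold w todaWeight
    nlinarith [mul_le_mul_of_nonneg_left h (by positivity : 0 ≤ c i₀ ^ 2 * (lam i₀ - μ) ^ 2)]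
  calc _ = c i₀ ^ 2 * c i₁ ^ 2 * (lam i₀ - lam i₁) ^ 2 / (c i₀ ^ 2 + c i₁ ^ 2) *
        exp (2 * lam i₁ * t) / ((∑ j, c j ^ 2) * exp (2 * lam i₀ * t)) := by
        rw [show -(2 * (lam i₀ - lam i₁)) * t = 2 * lam i₁ * t - 2 * lam i₀ * t by ring, exp_sub]
        field_simp
    _ ≤ (∑ j, (lam j - μ) ^ 2 * w j) / ∑ j, w j := by
        refine div_le_div₀ (sum_nonneg fun j _ => mul_nonneg (sq_nonneg _)
          (todaWeight_nonneg t j)) ?_ hW₀ hW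
        calc _ ≤ _ := by gcongr
          _ ≤ _ := hpair.trans (sq_sub_mul_add_sq_sub_mul_le_sum w lam (todaWeight_nonneg t) hi μ)

end Toda

theorem mul_exp_neg_mul_le_iff {κ A δ t : ℝ} (hκ : 0 < κ) (hA : 0 < A) (hδ : 0 < δ) :
    A * exp (-κ * t) ≤ δ ↔ log (A / δ) / κ ≤ t := by
  rw [div_le_iff₀ hκ, ← le_div_iff₀' hA, ← le_log_iff_exp_le (by positivity), ← inv_div,
    log_inv]
  constructor <;> intro h <;> linarith

theorem tendsto_log_div_div_log_inv {κ K : ℝ} (hκ : κ ≠ 0) (hK : 0 < K) :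
    Tendsto (fun δ => log (K / δ) / κ / log δ⁻¹) (𝓝[>] 0) (𝓝 κ⁻¹) := by
  have hL : Tendsto (fun δ : ℝ => log δ⁻¹) (𝓝[>] 0) atTop :=
    tendsto_log_atTop.comp tendsto_inv_nhdsGT_zero
  have h := ((tendsto_inv_atTop_zero.comp hL).const_mul (log K / κ)).add_const κ⁻¹
  rw [mul_zero, zero_add] at h
  refine h.congr' ?_
  filter_upwards [self_mem_nhdsWithin, hL.eventually_ne_atTop 0] with δ hδ hLδ
  rw [Function.comp_apply, div_eq_mul_inv K, log_mul hK.ne' (inv_ne_zero (ne_of_gt hδ))]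
  generalize log δ⁻¹ = L at hLδ ⊢
  field_simp

theorem tendsto_sInf_div_log_inv {E : ℝ → ℝ} {κ A B : ℝ} (hκ : 0 < κ) (hA : 0 < A)
    (hlow : ∀ t, 0 ≤ t → A * exp (-κ * t) ≤ E t) (hup : ∀ t, 0 ≤ t → E t ≤ B * exp (-κ * t)) :
    (∀ δ, 0 < δ → {t | 0 ≤ t ∧ E t ≤ δ}.Nonempty) ∧
      Tendsto (fun δ => sInf {t | 0 ≤ t ∧ E t ≤ δ} / log δ⁻¹) (𝓝[>] 0) (𝓝 κ⁻¹) := by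
  have hB : 0 < B := by
    have := (hlow 0 le_rfl).trans (hup 0 le_rfl)
    simp only [mul_zero, exp_zero, mul_one] at this
    linarith
  have hmem : ∀ δ, 0 < δ → max 0 (log (B / δ) / κ) ∈ {t | 0 ≤ t ∧ E t ≤ δ} := fun δ hδ =>
    ⟨le_max_left _ _, (hup _ (le_max_left _ _)).trans
      ((mul_exp_neg_mul_le_iff hκ hB hδ).2 (le_max_right _ _))⟩
  have hle : ∀ δ, 0 < δ → log (A / δ) / κ ≤ sInf {t | 0 ≤ t ∧ E t ≤ δ} := fun δ hδ =>
    le_csInf ⟨_, hmem δ hδ⟩ fun t ht =>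
      (mul_exp_neg_mul_le_iff hκ hA hδ).1 ((hlow t ht.1).trans ht.2)
  have hge : ∀ δ, 0 < δ → sInf {t | 0 ≤ t ∧ E t ≤ δ} ≤ max 0 (log (B / δ) / κ) := fun δ hδ =>
    csInf_le ⟨0, fun t ht => ht.1⟩ (hmem δ hδ)
  refine ⟨fun δ hδ => ⟨_, hmem δ hδ⟩, ?_⟩
  have hL : ∀ᶠ δ in 𝓝[>] (0 : ℝ), 0 < log δ⁻¹ :=
    (tendsto_log_atTop.comp tendsto_inv_nhdsGT_zero).eventually (eventually_gt_atTop 0)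
  refine tendsto_of_tendsto_of_tendsto_of_le_of_le' (tendsto_log_div_div_log_inv hκ.ne' hA)
    (tendsto_log_div_div_log_inv hκ.ne' hB) ?_ ?_
  · filter_upwards [self_mem_nhdsWithin, hL] with δ hδ hLδ
    exact div_le_div_of_nonneg_right (hle δ hδ) hLδ.le
  · have hsmall : ∀ᶠ δ in 𝓝[>] (0 : ℝ), δ < B :=
      nhdsWithin_le_nhds (eventually_lt_nhds hB)
    filter_upwards [self_mem_nhdsWithin, hL, hsmall] with δ hδ hLδ hδB
    have : 0 ≤ log (B / δ) / κ := div_nonneg (log_nonneg ((one_le_div hδ).2 hδB.le)) hκ.le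
    exact div_le_div_of_nonneg_right ((hge δ hδ).trans (max_eq_right this).le) hLδ.le

/-- **Asymptotics of the 1-deflation stopping time.**
Let `N ≥ 2`, `lam 0 > lam 1 ≥ lam 2 ≥ … ≥ lam (N-1)`, and let `c` be weights with
`∑ c k ^ 2 = 1`, `c 0 ≠ 0`, `c 1 ≠ 0`.  With `D`, `m`, `E` as in formulas (6)–(7)
and `T ε = inf {t ≥ 0 : E t ≤ ε²}`, the stopping time is finite for every `ε > 0`
(the defining set is nonempty) and `T ε / log ε⁻¹ → 1/(lam 0 - lam 1)` as `ε → 0⁺`. -/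
theorem halting_time_asymptotics (N : ℕ) (hN : 2 ≤ N)
    (lam c : Fin N → ℝ)
    (hgap : lam ⟨1, hN⟩ < lam ⟨0, by omega⟩)
    (hord : ∀ j k : Fin N, 1 ≤ (j : ℕ) → j ≤ k → lam k ≤ lam j)
    (hc1 : c ⟨0, by omega⟩ ≠ 0) (hc2 : c ⟨1, hN⟩ ≠ 0)
    (D : ℝ → ℝ) (hD : ∀ t, D t = ∑ k, (c k) ^ 2 * Real.exp (2 * lam k * t))
    (m : ℝ → ℝ)
    (hm : ∀ t, m t = (∑ j, lam j * (c j) ^ 2 * Real.exp (2 * lam j * t)) / D t)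
    (E : ℝ → ℝ)
    (hE : ∀ t, E t = (∑ j, (lam j - m t) ^ 2 * (c j) ^ 2 * Real.exp (2 * lam j * t)) / D t)
    (T : ℝ → ℝ) (hT : ∀ ε, T ε = sInf {t : ℝ | 0 ≤ t ∧ E t ≤ ε ^ 2}) :
    (∀ ε : ℝ, 0 < ε → {t : ℝ | 0 ≤ t ∧ E t ≤ ε ^ 2}.Nonempty) ∧
      Tendsto (fun ε => T ε / Real.log ε⁻¹) (nhdsWithin 0 (Set.Ioi 0))
        (nhds (1 / (lam ⟨0, by omega⟩ - lam ⟨1, hN⟩))) := by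
  set i₀ : Fin N := ⟨0, by omega⟩
  set i₁ : Fin N := ⟨1, hN⟩
  have hsecond : ∀ j, j ≠ i₀ → lam j ≤ lam i₁ := fun j hj =>
    hord i₁ j le_rfl (Nat.one_le_iff_ne_zero.2 fun h => hj (Fin.ext h))
  have htop : ∀ j, lam j ≤ lam i₀ := fun j => by
    by_cases hj : j = i₀
    · rw [hj]
    · exact (hsecond j hj).trans hgap.le
  have hEvar : E = fun t => weightedVariance (todaWeight lam c t) lam := by
    ext t
    simp only [hE, hm, hD, weightedVariance, weightedMean, todaWeight, mul_assoc]
  have hA : 0 < c i₀ ^ 2 * c i₁ ^ 2 * (lam i₀ - lam i₁) ^ 2 /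
      ((c i₀ ^ 2 + c i₁ ^ 2) * ∑ j, c j ^ 2) := by
    have hsum : 0 < ∑ j, c j ^ 2 :=
      (sq_pos_of_ne_zero hc1).trans_le (single_le_sum (fun j _ => sq_nonneg (c j)) (mem_univ i₀))
    have := sub_pos.2 hgap
    positivity
  subst hEvar
  obtain ⟨hne, hlim⟩ := tendsto_sInf_div_log_inv (by linarith) hA
    (fun t ht => le_weightedVariance_todaWeight htop (by simp [i₀, i₁, Fin.ext_iff]) hc1 hc2 ht)
    (fun t ht => weightedVariance_todaWeight_le hsecond hc1 ht)
  refine ⟨fun ε hε => hne _ (pow_pos hε 2), ?_⟩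
  have hsq : Tendsto (fun ε : ℝ => ε ^ 2) (𝓝[>] 0) (𝓝[>] 0) :=
    tendsto_nhdsWithin_of_tendsto_nhds_of_eventually_within _
      (by simpa using ((continuous_pow 2).tendsto (0 : ℝ)).mono_left nhdsWithin_le_nhds)
      (eventually_nhdsWithin_of_forall fun ε (hε : 0 < ε) => pow_pos hε 2)
  convert (hlim.comp hsq).const_mul 2 using 2
  · rw [Function.comp_apply, hT, ← inv_pow, log_pow, mul_div_assoc', Nat.cast_ofNat,
      mul_div_mul_left _ _ two_ne_zero]
  · field_simp
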